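/- Fix s ∈ X and Λ ≥ 1, and assume that for every k ≥ 0 one has (∑_{w∈W_k} a_s(w)) · (∑_{w∈W_k} a_s(w)^{-1}) ≤ Λ m^{2k} in [0,∞] (with 1/0 := +∞). Then N ↦ R_N(s) is nondecreasing, the limit R_∞(s) := lim_{N→∞} R_N(s) exists in (0,∞], and S(s) ≤ R_∞(s) ≤ Λ S(s), where S(s) := ∑_{k=0}^∞ m^k/(u_{2k+1}(s) − u_{2k}(s)) ∈ (0,∞] (a term with zero denominator being +∞). In particular, R_∞(s) < ∞ (equivalently, the limiting capacity Cap_∞(s) := 1/R_∞(s) is positive) if and only if S(s) < ∞. -/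

import Mathlib

/-! Since `K_{n+1} − K_n` is the `n`-th pullback of the p.d. kernel `LK − K`, every increment
`a_s(w)` is nonnegative and the increments of level `k` add up to `u_{2k+1}(s) − u_{2k}(s)`.
A unit flow carries mass `1` across every level, so by Cauchy–Schwarz (in Engel's form) the
level-`k` energy is at least `m^k / (u_{2k+1}(s) − u_{2k}(s))`, whence `R_N(s)` dominates the
partial sums of `S(s)`. Conversely, the uniform flow `m^{-(k+1)}` has level-`k` energy
`m^{-k} ∑_w a_s(w)⁻¹`, which the concentration hypothesis bounds by `Λ` times the same term.
Restricting flows makes `R_N(s)` monotone, so `R_∞(s) = sup_N R_N(s)` and `S ≤ R_∞ ≤ Λ S`. -/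

open Filter Topology
open scoped BigOperators ComplexOrder ENNReal

/-- A kernel `J : X × X → ℂ` is positive definite: every finite Gram sum
`∑ conj (c α) * c β * J (s α) (s β)` is a nonnegative real number
(using the partial order on `ℂ`). -/
def IsPD {X : Type*} (J : X → X → ℂ) : Prop :=
  ∀ (r : ℕ) (c : Fin r → ℂ) (p : Fin r → X),
    0 ≤ ∑ α, ∑ β, (starRingEnd ℂ) (c α) * c β * J (p α) (p β)

/-- The pullback operator `(LJ)(s,t) = ∑ i, J (φ i s) (φ i t)`. -/
noncomputable def pullback {X : Type*} (m : ℕ) (φ : Fin m → X → X) (J : X → X → ℂ) :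
    X → X → ℂ :=
  fun s t => ∑ i, J (φ i s) (φ i t)

/-- For a word `w = i₁⋯iₙ ∈ {1,…,m}ⁿ`, `phiW φ w = φ_{iₙ} ∘ ⋯ ∘ φ_{i₁}`. -/
def phiW {X : Type*} {m : ℕ} (φ : Fin m → X → X) : {n : ℕ} → (Fin n → Fin m) → X → X
  | 0, _, x => x
  | n + 1, w, x => φ (w (Fin.last n)) (phiW φ (fun i => w i.castSucc) x)

/-- The tower `K₀ = K`, `K_{n+1} = L Kₙ`. -/
noncomputable def tower {X : Type*} (m : ℕ) (φ : Fin m → X → X) (K : X → X → ℂ) :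
    ℕ → X → X → ℂ
  | 0 => K
  | n + 1 => pullback m φ (tower m φ K n)

/-- The diagonal `uₙ(s) = Kₙ(s,s)` (a real number, as `Kₙ` is p.d.). -/
noncomputable def diag {X : Type*} (m : ℕ) (φ : Fin m → X → X) (K : X → X → ℂ)
    (n : ℕ) (s : X) : ℝ :=
  (tower m φ K n s s).re

/-- The diagonal increment `a_s(w) = u_{|w|+1}(φ_w s) − u_{|w|}(φ_w s)`. -/
noncomputable def incr {X : Type*} (m : ℕ) (φ : Fin m → X → X) (K : X → X → ℂ)
    (s : X) {k : ℕ} (w : Fin k → Fin m) : ℝ :=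
  diag m φ K (k + 1) (phiW φ w s) - diag m φ K k (phiW φ w s)

/-- A unit flow to depth `N` on the rooted `m`-ary word tree:
`θ k w i` is the flow through the edge `(w, wi)` with `|w| = k`. -/
def IsUnitFlow (m N : ℕ) (θ : (k : ℕ) → (Fin k → Fin m) → Fin m → ℝ) : Prop :=
  (∀ k, k < N → ∀ (w : Fin k → Fin m) (i : Fin m), 0 ≤ θ k w i) ∧
  (∑ i : Fin m, θ 0 (fun j => j.elim0) i = 1) ∧
  (∀ k, k + 1 < N → ∀ (w : Fin k → Fin m) (i : Fin m),
    θ k w i = ∑ j : Fin m, θ (k + 1) (Fin.snoc w i) j)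

/-- The energy `𝔈_s(θ) = ∑_e θ(e)² / c_s(e) ∈ [0,∞]`, where the edge `(w,wi)`
has conductance `c_s(w,wi) = a_s(w)/m^{|w|+1}` (with `0/0 = 0` and `x/0 = ∞`
for `x > 0`, as in `ℝ≥0∞`). -/
noncomputable def energy {X : Type*} (m : ℕ) (φ : Fin m → X → X) (K : X → X → ℂ)
    (s : X) (N : ℕ) (θ : (k : ℕ) → (Fin k → Fin m) → Fin m → ℝ) : ℝ≥0∞ :=
  ∑ k ∈ Finset.range N, ∑ w : Fin k → Fin m, ∑ i : Fin m,
    ENNReal.ofReal (θ k w i) ^ 2 / ENNReal.ofReal (incr m φ K s w / (m : ℝ) ^ (k + 1))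

/-- The effective resistance `R_N(s)`: infimum of the energy over unit flows to depth `N`. -/
noncomputable def resistance {X : Type*} (m : ℕ) (φ : Fin m → X → X) (K : X → X → ℂ)
    (s : X) (N : ℕ) : ℝ≥0∞ :=
  ⨅ (θ : (k : ℕ) → (Fin k → Fin m) → Fin m → ℝ) (_ : IsUnitFlow m N θ),
    energy m φ K s N θ

/-- The scalar series `S(s) = ∑ₖ m^k / (u_{2k+1}(s) − u_{2k}(s)) ∈ [0,∞]`
(a term with zero denominator being `+∞`). -/
noncomputable def Sser {X : Type*} (m : ℕ) (φ : Fin m → X → X) (K : X → X → ℂ)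
    (s : X) : ℝ≥0∞ :=
  ∑' k : ℕ,
    (m : ℝ≥0∞) ^ k / ENNReal.ofReal (diag m φ K (2 * k + 1) s - diag m φ K (2 * k) s)

open scoped NNReal

section Kernels

variable {X : Type*} {m : ℕ} {φ : Fin m → X → X}

lemma IsPD.re_apply_self_nonneg {J : X → X → ℂ} (hJ : IsPD J) (t : X) : 0 ≤ (J t t).re := by
  have h := hJ 1 (fun _ => 1) (fun _ => t)
  simp only [Finset.univ_unique, Finset.sum_singleton, map_one, one_mul] at h
  exact (Complex.le_def.mp h).1

lemma IsPD.pullback {J : X → X → ℂ} (hJ : IsPD J) : IsPD (_root_.pullback m φ J) := by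
  intro r c p
  calc (0 : ℂ) ≤ ∑ i, ∑ α, ∑ β, (starRingEnd ℂ) (c α) * c β * J (φ i (p α)) (φ i (p β)) :=
        Finset.sum_nonneg fun i _ => hJ r c fun α => φ i (p α)
    _ = ∑ α, ∑ β, (starRingEnd ℂ) (c α) * c β * _root_.pullback m φ J (p α) (p β) := by
        simp only [_root_.pullback, Finset.mul_sum]
        exact Finset.sum_comm.trans (Finset.sum_congr rfl fun α _ => Finset.sum_comm)

lemma IsPD.tower {J : X → X → ℂ} (hJ : IsPD J) (n : ℕ) : IsPD (tower m φ J n) := by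
  induction n with
  | zero => exact hJ
  | succ n ih => exact ih.pullback

lemma tower_tower (J : X → X → ℂ) (k : ℕ) :
    ∀ n, tower m φ (tower m φ J k) n = tower m φ J (k + n)
  | 0 => rfl
  | n + 1 => congrArg (pullback m φ) (tower_tower J k n)

lemma tower_succ (J : X → X → ℂ) (n : ℕ) :
    tower m φ J (n + 1) = tower m φ (pullback m φ J) n := by
  rw [Nat.add_comm]
  exact (tower_tower J 1 n).symm

lemma phiW_snoc {k : ℕ} (w : Fin k → Fin m) (i : Fin m) (x : X) :
    phiW φ (Fin.snoc w i) x = φ i (phiW φ w x) := by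
  simp only [phiW, Fin.snoc_last]
  congr
  funext j
  exact Fin.snoc_castSucc ..

lemma Fintype.sum_fin_succ_fun {α M : Type*} [Fintype α] [AddCommMonoid M] {k : ℕ}
    (f : (Fin (k + 1) → α) → M) :
    ∑ w : Fin (k + 1) → α, f w = ∑ w : Fin k → α, ∑ i, f (Fin.snoc w i) := by
  rw [← (Fin.snocEquiv fun _ => α).sum_comp, Fintype.sum_prod_type, Finset.sum_comm]
  rfl

lemma tower_eq_sum_phiW (J : X → X → ℂ) (k : ℕ) (s t : X) :
    tower m φ J k s t = ∑ w : Fin k → Fin m, J (phiW φ w s) (phiW φ w t) := by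
  induction k generalizing J with
  | zero => exact (Fintype.sum_unique (fun w : Fin 0 → Fin m => J (phiW φ w s) (phiW φ w t))).symm
  | succ k ih =>
    rw [tower_succ, ih, Fintype.sum_fin_succ_fun]
    simp only [phiW_snoc]
    rfl

lemma tower_sub (J J' : X → X → ℂ) (k : ℕ) (s t : X) :
    tower m φ (fun a b => J a b - J' a b) k s t = tower m φ J k s t - tower m φ J' k s t := by
  simp only [tower_eq_sum_phiW, Finset.sum_sub_distrib]

lemma tower_succ_sub_tower (K : X → X → ℂ) (n : ℕ) (s t : X) :
    tower m φ K (n + 1) s t - tower m φ K n s t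
      = tower m φ (fun a b => pullback m φ K a b - K a b) n s t := by
  rw [tower_sub, tower_succ]

lemma incr_eq_re_tower (K : X → X → ℂ) (s : X) {k : ℕ} (w : Fin k → Fin m) :
    incr m φ K s w = (tower m φ (fun a b => pullback m φ K a b - K a b) k
      (phiW φ w s) (phiW φ w s)).re := by
  rw [← tower_succ_sub_tower, Complex.sub_re]
  rfl

lemma incr_nonneg {K : X → X → ℂ} (hsub : IsPD fun a b => pullback m φ K a b - K a b)
    (s : X) {k : ℕ} (w : Fin k → Fin m) : 0 ≤ incr m φ K s w := by
  rw [incr_eq_re_tower]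
  exact (hsub.tower k).re_apply_self_nonneg _

lemma sum_incr (K : X → X → ℂ) (s : X) (k : ℕ) :
    ∑ w : Fin k → Fin m, incr m φ K s w = diag m φ K (2 * k + 1) s - diag m φ K (2 * k) s := by
  simp only [incr_eq_re_tower, ← Complex.re_sum, ← tower_eq_sum_phiW, tower_tower, diag,
    ← Complex.sub_re, tower_succ_sub_tower, two_mul]

end Kernels

lemma ENNReal.sq_sum_div_le_sum_sq_div {ι : Type*} (s : Finset ι) (f c : ι → ℝ≥0) :
    (∑ i ∈ s, (f i : ℝ≥0∞)) ^ 2 / ∑ i ∈ s, (c i : ℝ≥0∞) ≤ ∑ i ∈ s, (f i : ℝ≥0∞) ^ 2 / c i := by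
  classical
  by_cases hdeg : ∃ i ∈ s, c i = 0 ∧ f i ≠ 0
  · obtain ⟨i, hi, hci, hfi⟩ := hdeg
    have hterm : (f i : ℝ≥0∞) ^ 2 / c i = ⊤ := by
      rw [hci, ENNReal.coe_zero, ENNReal.div_zero (pow_ne_zero 2 (by exact_mod_cast hfi))]
    calc _ ≤ (f i : ℝ≥0∞) ^ 2 / c i := hterm ▸ le_top
      _ ≤ _ := Finset.single_le_sum (f := fun i => (f i : ℝ≥0∞) ^ 2 / c i) (fun _ _ => zero_le) hi
  push Not at hdeg
  rcases eq_or_ne (∑ i ∈ s, c i) 0 with hc0 | hc0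
  · have hf0 : ∑ i ∈ s, f i = 0 :=
      Finset.sum_eq_zero fun i hi => hdeg i hi (Finset.sum_eq_zero_iff.mp hc0 i hi)
    simp only [← ENNReal.ofNNReal_finsetSum, hf0]
    simp
  set t := s.filter fun i => c i ≠ 0
  have hft : ∑ i ∈ t, f i = ∑ i ∈ s, f i :=
    Finset.sum_filter_of_ne fun i hi hfi hci => hfi (hdeg i hi hci)
  have hct : ∑ i ∈ t, c i = ∑ i ∈ s, c i := Finset.sum_filter_ne_zero s
  calc (∑ i ∈ s, (f i : ℝ≥0∞)) ^ 2 / ∑ i ∈ s, (c i : ℝ≥0∞)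
      = ((∑ i ∈ t, f i) ^ 2 / ∑ i ∈ t, c i : ℝ≥0) := by
        rw [hft, hct, ENNReal.coe_div hc0, ENNReal.coe_pow, ENNReal.ofNNReal_finsetSum,
          ENNReal.ofNNReal_finsetSum]
    _ ≤ (∑ i ∈ t, f i ^ 2 / c i : ℝ≥0) := ENNReal.coe_le_coe.mpr <|
        Finset.sq_sum_div_le_sum_sq_div t f fun i hi => pos_iff_ne_zero.mpr (Finset.mem_filter.mp hi).2
    _ = ∑ i ∈ t, (f i : ℝ≥0∞) ^ 2 / c i := by
        rw [ENNReal.ofNNReal_finsetSum]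
        refine Finset.sum_congr rfl fun i hi => ?_
        rw [ENNReal.coe_div (Finset.mem_filter.mp hi).2, ENNReal.coe_pow]
    _ ≤ ∑ i ∈ s, (f i : ℝ≥0∞) ^ 2 / c i := Finset.sum_le_sum_of_subset (Finset.filter_subset _ _)

section Flows

variable {m : ℕ} {θ : (k : ℕ) → (Fin k → Fin m) → Fin m → ℝ}

lemma IsUnitFlow.mono {N₁ N₂ : ℕ} (hθ : IsUnitFlow m N₂ θ) (h : N₁ ≤ N₂) :
    IsUnitFlow m N₁ θ :=
  ⟨fun k hk => hθ.1 k (hk.trans_le h), hθ.2.1, fun k hk => hθ.2.2 k (hk.trans_le h)⟩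

lemma IsUnitFlow.sum_level {N : ℕ} (hθ : IsUnitFlow m N θ) {k : ℕ} (hk : k < N) :
    ∑ w : Fin k → Fin m, ∑ i, θ k w i = 1 := by
  induction k with
  | zero =>
    rw [Fintype.sum_unique, Subsingleton.elim default fun j => j.elim0]
    exact hθ.2.1
  | succ k ih =>
    rw [Fintype.sum_fin_succ_fun, ← ih (Nat.lt_of_succ_lt hk)]
    exact Finset.sum_congr rfl fun w _ =>
      Finset.sum_congr rfl fun i _ => (hθ.2.2 k hk w i).symm

lemma isUnitFlow_uniform (hm : m ≠ 0) (N : ℕ) :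
    IsUnitFlow m N fun k _ _ => ((m : ℝ) ^ (k + 1))⁻¹ := by
  have hmR : (m : ℝ) ≠ 0 := Nat.cast_ne_zero.mpr hm
  refine ⟨fun k _ _ _ => by positivity, ?_, fun k _ _ _ => ?_⟩ <;>
    simp only [Finset.sum_const, Finset.card_univ, Fintype.card_fin, nsmul_eq_mul]
  · rw [zero_add, pow_one, mul_inv_cancel₀ hmR]
  · field_simp
    ring

end Flows

lemma ENNReal.ofReal_div_natCast_pow {n : ℕ} (hn : n ≠ 0) (x : ℝ) (k : ℕ) :
    ENNReal.ofReal (x / (n : ℝ) ^ k) = ENNReal.ofReal x / (n : ℝ≥0∞) ^ k := by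
  rw [ENNReal.ofReal_div_of_pos (by positivity), ENNReal.ofReal_pow (Nat.cast_nonneg n),
    ENNReal.ofReal_natCast]

lemma ENNReal.mul_inv_pow_succ {a : ℝ≥0∞} (h0 : a ≠ 0) (htop : a ≠ ⊤) (k : ℕ) :
    a * (a ^ (k + 1))⁻¹ = (a ^ k)⁻¹ := by
  rw [pow_succ', ENNReal.mul_inv (Or.inl h0) (Or.inl htop), ← mul_assoc,
    ENNReal.mul_inv_cancel h0 htop, one_mul]

section Resistance

variable {X : Type*} {m : ℕ} {φ : Fin m → X → X} {K : X → X → ℂ} {s : X}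

noncomputable def levelEnergy (m : ℕ) (φ : Fin m → X → X) (K : X → X → ℂ) (s : X)
    (θ : (k : ℕ) → (Fin k → Fin m) → Fin m → ℝ) (k : ℕ) : ℝ≥0∞ :=
  ∑ w : Fin k → Fin m, ∑ i : Fin m,
    ENNReal.ofReal (θ k w i) ^ 2 / ENNReal.ofReal (incr m φ K s w / (m : ℝ) ^ (k + 1))

noncomputable def diagGap (m : ℕ) (φ : Fin m → X → X) (K : X → X → ℂ) (s : X) (k : ℕ) :
    ℝ≥0∞ :=
  ENNReal.ofReal (diag m φ K (2 * k + 1) s - diag m φ K (2 * k) s)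

lemma diagGap_ne_top (k : ℕ) : diagGap m φ K s k ≠ ⊤ := ENNReal.ofReal_ne_top

lemma sum_ofReal_incr (hsub : IsPD fun a b => pullback m φ K a b - K a b) (k : ℕ) :
    ∑ w : Fin k → Fin m, ENNReal.ofReal (incr m φ K s w) = diagGap m φ K s k := by
  rw [← ENNReal.ofReal_sum_of_nonneg fun w _ => incr_nonneg hsub s w, sum_incr]
  rfl

lemma resistance_mono : Monotone (resistance m φ K s) := fun _ _ h =>
  le_iInf₂ fun θ hθ => (iInf₂_le θ (hθ.mono h)).trans <|
    Finset.sum_le_sum_of_subset (Finset.range_subset_range.mpr h)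

lemma pow_div_diagGap_le_levelEnergy (hm : m ≠ 0)
    (hsub : IsPD fun a b => pullback m φ K a b - K a b)
    {N : ℕ} {θ : (k : ℕ) → (Fin k → Fin m) → Fin m → ℝ} (hθ : IsUnitFlow m N θ)
    {k : ℕ} (hk : k < N) :
    (m : ℝ≥0∞) ^ k / diagGap m φ K s k ≤ levelEnergy m φ K s θ k := by
  have hm0 : (m : ℝ≥0∞) ≠ 0 := Nat.cast_ne_zero.mpr hm
  have hmass : ∑ p : (Fin k → Fin m) × Fin m, ENNReal.ofReal (θ k p.1 p.2) = 1 := by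
    rw [Fintype.sum_prod_type, ← ENNReal.ofReal_one, ← hθ.sum_level hk,
      ENNReal.ofReal_sum_of_nonneg fun w _ => Finset.sum_nonneg fun i _ => hθ.1 k hk w i]
    exact Finset.sum_congr rfl fun w _ =>
      (ENNReal.ofReal_sum_of_nonneg fun i _ => hθ.1 k hk w i).symm
  have hcond : ∑ p : (Fin k → Fin m) × Fin m,
      ENNReal.ofReal (incr m φ K s p.1 / (m : ℝ) ^ (k + 1)) = diagGap m φ K s k / m ^ k := by
    simp_rw [Fintype.sum_prod_type, ENNReal.ofReal_div_natCast_pow hm]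
    simp only [Finset.sum_const, Finset.card_univ, Fintype.card_fin, nsmul_eq_mul]
    simp_rw [← Finset.mul_sum, div_eq_mul_inv]
    rw [← Finset.sum_mul, sum_ofReal_incr hsub]
    rw [mul_left_comm, ENNReal.mul_inv_pow_succ hm0 (ENNReal.natCast_ne_top m)]
  calc (m : ℝ≥0∞) ^ k / diagGap m φ K s k
      = 1 ^ 2 / (diagGap m φ K s k / m ^ k) := by
        rw [one_pow, one_div, ENNReal.inv_div (Or.inr (diagGap_ne_top k))
          (Or.inl (pow_ne_zero k hm0))]
    _ = (∑ p : (Fin k → Fin m) × Fin m, ENNReal.ofReal (θ k p.1 p.2)) ^ 2 /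
          ∑ p : (Fin k → Fin m) × Fin m, ENNReal.ofReal (incr m φ K s p.1 / (m : ℝ) ^ (k + 1)) := by
        rw [hmass, hcond]
    _ ≤ ∑ p : (Fin k → Fin m) × Fin m, ENNReal.ofReal (θ k p.1 p.2) ^ 2 /
          ENNReal.ofReal (incr m φ K s p.1 / (m : ℝ) ^ (k + 1)) :=
by
        simp only [ENNReal.ofReal]
        exact ENNReal.sq_sum_div_le_sum_sq_div _ _ _
    _ = levelEnergy m φ K s θ k := Fintype.sum_prod_type _

lemma levelEnergy_uniform_le (hm : m ≠ 0) (hsub : IsPD fun a b => pullback m φ K a b - K a b)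
    {Λ : ℝ} (hΛ : 0 < Λ) {k : ℕ}
    (hconc : (∑ w : Fin k → Fin m, ENNReal.ofReal (incr m φ K s w)) *
        (∑ w : Fin k → Fin m, (ENNReal.ofReal (incr m φ K s w))⁻¹)
      ≤ ENNReal.ofReal Λ * (m : ℝ≥0∞) ^ (2 * k)) :
    levelEnergy m φ K s (fun k _ _ => ((m : ℝ) ^ (k + 1))⁻¹) k
      ≤ ENNReal.ofReal Λ * ((m : ℝ≥0∞) ^ k / diagGap m φ K s k) := by
  have hm0 : (m : ℝ≥0∞) ≠ 0 := Nat.cast_ne_zero.mpr hm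
  have hmtop : (m : ℝ≥0∞) ≠ ⊤ := ENNReal.natCast_ne_top m
  set M := (m : ℝ≥0∞) ^ (k + 1)
  have hM0 : M ≠ 0 := pow_ne_zero _ hm0
  have hMtop : M ≠ ⊤ := ENNReal.pow_ne_top hmtop
  set D := diagGap m φ K s k
  set Y := ∑ w : Fin k → Fin m, (ENNReal.ofReal (incr m φ K s w))⁻¹
  rw [sum_ofReal_incr hsub] at hconc
  have hterm : ∀ w : Fin k → Fin m,
      ENNReal.ofReal (((m : ℝ) ^ (k + 1))⁻¹) ^ 2 / ENNReal.ofReal (incr m φ K s w / m ^ (k + 1))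
        = M⁻¹ * (ENNReal.ofReal (incr m φ K s w))⁻¹ := fun w => by
    rw [ENNReal.ofReal_inv_of_pos (by positivity), ENNReal.ofReal_pow (Nat.cast_nonneg m),
      ENNReal.ofReal_natCast, ENNReal.ofReal_div_natCast_pow hm, div_eq_mul_inv,
      ENNReal.inv_div (Or.inl hMtop) (Or.inl hM0), div_eq_mul_inv, pow_two, mul_assoc,
      ← mul_assoc M⁻¹ M, ENNReal.inv_mul_cancel hM0 hMtop, one_mul]
  have henergy : levelEnergy m φ K s (fun k _ _ => ((m : ℝ) ^ (k + 1))⁻¹) k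
      = ((m : ℝ≥0∞) ^ k)⁻¹ * Y := by
    simp only [levelEnergy, hterm, Finset.sum_const, Finset.card_univ, Fintype.card_fin,
      nsmul_eq_mul, ← Finset.mul_sum, ← mul_assoc, M, ENNReal.mul_inv_pow_succ hm0 hmtop]
    rfl
  rw [henergy]
  rcases eq_or_ne D 0 with hD | hD
  · rw [hD, ENNReal.div_zero (pow_ne_zero k hm0), ENNReal.mul_top (by positivity)]
    exact le_top
  have hmk0 : (m : ℝ≥0∞) ^ k ≠ 0 := pow_ne_zero k hm0
  have hmktop : (m : ℝ≥0∞) ^ k ≠ ⊤ := ENNReal.pow_ne_top hmtop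
  rw [← mul_div_assoc, ENNReal.le_div_iff_mul_le (Or.inl hD) (Or.inl (diagGap_ne_top k))]
  calc ((m : ℝ≥0∞) ^ k)⁻¹ * Y * D = ((m : ℝ≥0∞) ^ k)⁻¹ * (D * Y) := by ring
    _ ≤ ((m : ℝ≥0∞) ^ k)⁻¹ * (ENNReal.ofReal Λ * (m : ℝ≥0∞) ^ (2 * k)) := by gcongr
    _ = ENNReal.ofReal Λ * (m : ℝ≥0∞) ^ k * (((m : ℝ≥0∞) ^ k)⁻¹ * (m : ℝ≥0∞) ^ k) := by
        rw [two_mul, pow_add]; ring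
    _ = ENNReal.ofReal Λ * (m : ℝ≥0∞) ^ k := by
        rw [ENNReal.inv_mul_cancel hmk0 hmktop, mul_one]

lemma sum_pow_div_diagGap_le_resistance (hm : m ≠ 0)
    (hsub : IsPD fun a b => pullback m φ K a b - K a b) (N : ℕ) :
    ∑ k ∈ Finset.range N, (m : ℝ≥0∞) ^ k / diagGap m φ K s k ≤ resistance m φ K s N :=
  le_iInf₂ fun _ hθ => Finset.sum_le_sum fun _ hk =>
    pow_div_diagGap_le_levelEnergy hm hsub hθ (Finset.mem_range.mp hk)

lemma resistance_le_mul_sser (hm : m ≠ 0) (hsub : IsPD fun a b => pullback m φ K a b - K a b)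
    {Λ : ℝ} (hΛ : 0 < Λ)
    (hconc : ∀ k : ℕ, (∑ w : Fin k → Fin m, ENNReal.ofReal (incr m φ K s w)) *
        (∑ w : Fin k → Fin m, (ENNReal.ofReal (incr m φ K s w))⁻¹)
      ≤ ENNReal.ofReal Λ * (m : ℝ≥0∞) ^ (2 * k)) (N : ℕ) :
    resistance m φ K s N ≤ ENNReal.ofReal Λ * Sser m φ K s :=
  calc resistance m φ K s N
      ≤ ∑ k ∈ Finset.range N, levelEnergy m φ K s (fun k _ _ => ((m : ℝ) ^ (k + 1))⁻¹) k :=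
        iInf₂_le _ (isUnitFlow_uniform hm N)
    _ ≤ ∑ k ∈ Finset.range N, ENNReal.ofReal Λ * ((m : ℝ≥0∞) ^ k / diagGap m φ K s k) :=
        Finset.sum_le_sum fun k _ => levelEnergy_uniform_le hm hsub hΛ (hconc k)
    _ ≤ ENNReal.ofReal Λ * Sser m φ K s := by
        rw [← Finset.mul_sum]
        exact mul_le_mul_right (ENNReal.sum_le_tsum _) _

end Resistance

theorem stmt4_general {X : Type*} (m : ℕ) (hm : 1 ≤ m) (φ : Fin m → X → X)
    (K : X → X → ℂ)
    (hsub : IsPD (fun s t => pullback m φ K s t - K s t))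
    (s : X) (Λ : ℝ) (hΛ : 1 ≤ Λ)
    (hconc : ∀ k : ℕ,
      (∑ w : Fin k → Fin m, ENNReal.ofReal (incr m φ K s w)) *
          (∑ w : Fin k → Fin m, (ENNReal.ofReal (incr m φ K s w))⁻¹)
        ≤ ENNReal.ofReal Λ * (m : ℝ≥0∞) ^ (2 * k)) :
    (∀ N₁ N₂ : ℕ, 1 ≤ N₁ → N₁ ≤ N₂ →
      resistance m φ K s N₁ ≤ resistance m φ K s N₂) ∧
    ∃ Rinf : ℝ≥0∞,
      Tendsto (fun N => resistance m φ K s N) atTop (𝓝 Rinf) ∧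
      0 < Rinf ∧
      Sser m φ K s ≤ Rinf ∧
      Rinf ≤ ENNReal.ofReal Λ * Sser m φ K s ∧
      (Rinf < ⊤ ↔ Sser m φ K s < ⊤) := by
  have hm0 : m ≠ 0 := Nat.one_le_iff_ne_zero.mp hm
  have hmono : Monotone (resistance m φ K s) := resistance_mono
  have hlower : Sser m φ K s ≤ ⨆ N, resistance m φ K s N := by
    rw [Sser, ENNReal.tsum_eq_iSup_nat]
    exact iSup_mono (sum_pow_div_diagGap_le_resistance hm0 hsub)
  have hupper : ⨆ N, resistance m φ K s N ≤ ENNReal.ofReal Λ * Sser m φ K s :=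
    iSup_le (resistance_le_mul_sser hm0 hsub (by linarith) hconc)
  have hpos : 0 < Sser m φ K s :=
    (ENNReal.div_pos (pow_ne_zero 0 (Nat.cast_ne_zero.mpr hm0)) (diagGap_ne_top 0)).trans_le
      (ENNReal.le_tsum 0)
  refine ⟨fun N₁ N₂ _ h => hmono h, ⨆ N, resistance m φ K s N, tendsto_atTop_iSup hmono,
    hpos.trans_le hlower, hlower, hupper, hlower.trans_lt, fun h => hupper.trans_lt ?_⟩
  exact ENNReal.mul_lt_top ENNReal.ofReal_lt_top h

/-- Under the level concentration hypothesis at every level: the resistances are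
nondecreasing in the depth, the limit `R_∞(s)` exists in `(0,∞]`, it is comparable to
the scalar series `S(s)` up to the factor `Λ`, and `R_∞(s) < ∞` (i.e. the limiting
capacity `1/R_∞(s)` is positive) if and only if `S(s) < ∞`. -/
theorem stmt4 {X : Type*} (m : ℕ) (hm : 1 ≤ m) (φ : Fin m → X → X)
    (K : X → X → ℂ) (hK : IsPD K)
    (hsub : IsPD (fun s t => pullback m φ K s t - K s t))
    (s : X) (Λ : ℝ) (hΛ : 1 ≤ Λ)
    (hconc : ∀ k : ℕ,
      (∑ w : Fin k → Fin m, ENNReal.ofReal (incr m φ K s w)) *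
          (∑ w : Fin k → Fin m, (ENNReal.ofReal (incr m φ K s w))⁻¹)
        ≤ ENNReal.ofReal Λ * (m : ℝ≥0∞) ^ (2 * k)) :
    (∀ N₁ N₂ : ℕ, 1 ≤ N₁ → N₁ ≤ N₂ →
      resistance m φ K s N₁ ≤ resistance m φ K s N₂) ∧
    ∃ Rinf : ℝ≥0∞,
      Tendsto (fun N => resistance m φ K s N) atTop (𝓝 Rinf) ∧
      0 < Rinf ∧
      Sser m φ K s ≤ Rinf ∧
      Rinf ≤ ENNReal.ofReal Λ * Sser m φ K s ∧
      (Rinf < ⊤ ↔ Sser m φ K s < ⊤) :=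
  stmt4_general m hm φ K hsub s Λ hΛ hconc
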